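/- Let G be a hypergraph and (A,Ā) a doubly tri-well-linked separation of G. Then G contains a tangle 𝒯 of order λ(A) such that every B ⊆ E(G) with λ(B) < λ(A) and (B ⊆ A or B ⊆ Ā) satisfies B ∈ 𝒯. -/
import Mathlib
set_option maxHeartbeats 1000000


open Finset

variable {V E : Type} [Fintype V] [DecidableEq V] [Fintype E] [DecidableEq E]

/-- `V(A)`: the union of the vertex sets of the hyperedges in `A`. -/
def hVerts (inc : E → Finset V) (A : Finset E) : Finset V :=
  A.biUnion inc

/-- The border `bd(A) = V(A) ∩ V(Ā)` of a set of hyperedges. -/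
def hBd (inc : E → Finset V) (A : Finset E) : Finset V :=
  hVerts inc A ∩ hVerts inc Aᶜ

/-- The order function `λ(A) = |bd(A)|`. -/
def hLam (inc : E → Finset V) (A : Finset E) : ℕ :=
  (hBd inc A).card

/-- `A` is tri-well-linked: for every tripartition `(B1, B2, B3)` of `A` there is `i` with
`λ(Bi) ≥ λ(A)`. -/
def TriWellLinked (inc : E → Finset V) (A : Finset E) : Prop :=
  ∀ B1 B2 B3 : Finset E, Disjoint B1 B2 → Disjoint B1 B3 → Disjoint B2 B3 →
    B1 ∪ B2 ∪ B3 = A →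
    hLam inc A ≤ hLam inc B1 ∨ hLam inc A ≤ hLam inc B2 ∨ hLam inc A ≤ hLam inc B3

/-- `𝒯` is a tangle of order `k` of the hypergraph. -/
def IsTangle (inc : E → Finset V) (k : ℕ) (𝒯 : Set (Finset E)) : Prop :=
  (∀ A ∈ 𝒯, hLam inc A < k) ∧
  (∀ A : Finset E, hLam inc A < k → A ∈ 𝒯 ∨ Aᶜ ∈ 𝒯) ∧
  (∀ A ∈ 𝒯, ∀ B ∈ 𝒯, ∀ C ∈ 𝒯, A ∪ B ∪ C ≠ Finset.univ) ∧
  (∀ e : E, ({e}ᶜ : Finset E) ∉ 𝒯)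

lemma hLam_empty (inc : E → Finset V) : hLam inc (∅ : Finset E) = 0 := by
  simp [hLam, hBd, hVerts]

lemma hLam_compl (inc : E → Finset V) (A : Finset E) : hLam inc Aᶜ = hLam inc A := by
  simp only [hLam, hBd, compl_compl]
  rw [inter_comm]

/-- Submodularity of the order function. -/
lemma hLam_submod (inc : E → Finset V) (X Y : Finset E) :
    hLam inc (X ∩ Y) + hLam inc (X ∪ Y) ≤ hLam inc X + hLam inc Y := by
  have h1 : hBd inc (X ∩ Y) ∪ hBd inc (X ∪ Y) ⊆ hBd inc X ∪ hBd inc Y := by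
    intro v hv
    simp only [hBd, hVerts, mem_union, mem_inter, mem_biUnion, mem_compl] at hv ⊢
    rcases hv with ⟨⟨e1, he1, hv1⟩, ⟨e2, he2, hv2⟩⟩ | ⟨⟨e1, he1, hv1⟩, ⟨e2, he2, hv2⟩⟩
    · simp only [mem_inter, not_and] at he1 he2
      by_cases hX : e2 ∈ X
      · right
        exact ⟨⟨e1, he1.2, hv1⟩, ⟨e2, he2 hX, hv2⟩⟩
      · left
        exact ⟨⟨e1, he1.1, hv1⟩, ⟨e2, hX, hv2⟩⟩
    · simp only [mem_union, not_or] at he1 he2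
      rcases he1 with hX | hY
      · exact Or.inl ⟨⟨e1, hX, hv1⟩, ⟨e2, he2.1, hv2⟩⟩
      · exact Or.inr ⟨⟨e1, hY, hv1⟩, ⟨e2, he2.2, hv2⟩⟩
  have h2 : hBd inc (X ∩ Y) ∩ hBd inc (X ∪ Y) ⊆ hBd inc X ∩ hBd inc Y := by
    intro v hv
    simp only [hBd, hVerts, mem_inter, mem_biUnion, mem_compl, mem_union, not_or] at hv ⊢
    obtain ⟨⟨⟨e1, he1, hv1⟩, -⟩, ⟨-, ⟨e2, he2, hv2⟩⟩⟩ := hv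
    exact ⟨⟨⟨e1, he1.1, hv1⟩, ⟨e2, he2.1, hv2⟩⟩, ⟨⟨e1, he1.2, hv1⟩, ⟨e2, he2.2, hv2⟩⟩⟩
  have e1 := Finset.card_union_add_card_inter (hBd inc (X ∩ Y)) (hBd inc (X ∪ Y))
  have e2 := Finset.card_union_add_card_inter (hBd inc X) (hBd inc Y)
  have c1 := Finset.card_le_card h1
  have c2 := Finset.card_le_card h2
  simp only [hLam]
  omega

/-- Posimodularity of the order function. -/
lemma hLam_posimod (inc : E → Finset V) (X Y : Finset E) :
    hLam inc (X \ Y) + hLam inc (Y \ X) ≤ hLam inc X + hLam inc Y := by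
  have h := hLam_submod inc X Yᶜ
  have h1 : X ∩ Yᶜ = X \ Y := by ext a; simp [mem_sdiff]
  have h2 : (X ∪ Yᶜ)ᶜ = Y \ X := by ext a; simp [mem_sdiff, not_or]; tauto
  rw [h1, hLam_compl inc Y] at h
  rw [← hLam_compl inc (X ∪ Yᶜ), h2] at h
  exact h

lemma card_sdiff_lt' {X Y : Finset E} {x : E} (hx1 : x ∈ X) (hx2 : x ∈ Y) :
    (X \ Y).card < X.card := by
  apply Finset.card_lt_card
  rw [Finset.ssubset_iff_of_subset Finset.sdiff_subset]
  exact ⟨x, hx1, by simp [hx2]⟩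

/-- A tri-well-linked set cannot be covered by three sets each of order smaller
than its own order. -/
lemma triWellLinked_no_small_cover (inc : E → Finset V) (A : Finset E)
    (h : TriWellLinked inc A) :
    ∀ n (P1 P2 P3 : Finset E), P1.card + P2.card + P3.card ≤ n →
      P1 ∪ P2 ∪ P3 = A → hLam inc P1 < hLam inc A → hLam inc P2 < hLam inc A →
      hLam inc P3 < hLam inc A → False := by
  intro n
  induction n with
  | zero =>
    intro P1 P2 P3 hcard hU hl1 hl2 hl3
    have h1 : P1 = ∅ := Finset.card_eq_zero.mp (by omega)
    have h2 : P2 = ∅ := Finset.card_eq_zero.mp (by omega)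
    have h3 : P3 = ∅ := Finset.card_eq_zero.mp (by omega)
    subst h1 h2 h3
    rcases h ∅ ∅ ∅ (disjoint_bot_right) (disjoint_bot_right) (disjoint_bot_right)
      hU with hh | hh | hh <;>
      rw [hLam_empty] at hh <;> omega
  | succ n ih =>
    intro P1 P2 P3 hcard hU hl1 hl2 hl3
    by_cases d12 : Disjoint P1 P2
    · by_cases d13 : Disjoint P1 P3
      · by_cases d23 : Disjoint P2 P3
        · rcases h P1 P2 P3 d12 d13 d23 hU with hh | hh | hh <;> omega
        · -- P2 and P3 overlap
          obtain ⟨x, hx2, hx3⟩ := Finset.not_disjoint_iff.mp d23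
          have hp := hLam_posimod inc P2 P3
          have hcard2 : (P2 \ P3).card < P2.card :=
            card_sdiff_lt' hx2 hx3
          have hcard3 : (P3 \ P2).card < P3.card :=
            card_sdiff_lt' hx3 hx2
          by_cases hc : hLam inc (P2 \ P3) < hLam inc A
          · refine ih P1 (P2 \ P3) P3 (by omega) ?_ hl1 hc hl3
            rw [union_assoc, Finset.sdiff_union_self_eq_union, ← union_assoc, hU]
          · have hc' : hLam inc (P3 \ P2) < hLam inc A := by omega
            refine ih P1 P2 (P3 \ P2) (by omega) ?_ hl1 hl2 hc'
            rw [union_assoc, Finset.union_sdiff_self_eq_union, ← union_assoc, hU]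
      · -- P1 and P3 overlap
        obtain ⟨x, hx1, hx3⟩ := Finset.not_disjoint_iff.mp d13
        have hp := hLam_posimod inc P1 P3
        have hcard1 : (P1 \ P3).card < P1.card :=
          card_sdiff_lt' hx1 hx3
        have hcard3 : (P3 \ P1).card < P3.card :=
          card_sdiff_lt' hx3 hx1
        by_cases hc : hLam inc (P1 \ P3) < hLam inc A
        · refine ih (P1 \ P3) P2 P3 (by omega) ?_ hc hl2 hl3
          rw [union_right_comm, Finset.sdiff_union_self_eq_union, union_right_comm, hU]
        · have hc' : hLam inc (P3 \ P1) < hLam inc A := by omega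
          refine ih P1 P2 (P3 \ P1) (by omega) ?_ hl1 hl2 hc'
          rw [union_right_comm, Finset.union_sdiff_self_eq_union, union_right_comm, hU]
    · -- P1 and P2 overlap
      obtain ⟨x, hx1, hx2⟩ := Finset.not_disjoint_iff.mp d12
      have hp := hLam_posimod inc P1 P2
      have hcard1 : (P1 \ P2).card < P1.card :=
        card_sdiff_lt' hx1 hx2
      have hcard2 : (P2 \ P1).card < P2.card :=
        card_sdiff_lt' hx2 hx1
      by_cases hc : hLam inc (P1 \ P2) < hLam inc A
      · refine ih (P1 \ P2) P2 P3 (by omega) ?_ hc hl2 hl3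
        rw [Finset.sdiff_union_self_eq_union, hU]
      · have hc' : hLam inc (P2 \ P1) < hLam inc A := by omega
        refine ih P1 (P2 \ P1) P3 (by omega) ?_ hl1 hc' hl3
        rw [Finset.union_sdiff_self_eq_union, hU]

/-- Key uncrossing lemma: if `C` is tri-well-linked and `λ(B) < λ(C)`,
`λ(C ∩ B) < λ(C)`, then also `λ(Cᶜ ∩ B) < λ(C)`. -/
lemma triWellLinked_key (inc : E → Finset V) (C : Finset E)
    (hC : TriWellLinked inc C) (B : Finset E)
    (hB : hLam inc B < hLam inc C) (h2 : hLam inc (C ∩ B) < hLam inc C) :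
    hLam inc (Cᶜ ∩ B) < hLam inc C := by
  by_contra hcon
  push_neg at hcon
  have hs := hLam_submod inc Cᶜ B
  rw [hLam_compl inc C] at hs
  have h3 : hLam inc (Cᶜ ∪ B) < hLam inc C := by omega
  have h4 : hLam inc (C \ B) < hLam inc C := by
    have he : (Cᶜ ∪ B)ᶜ = C \ B := by
      ext a
      simp only [mem_compl, mem_union, mem_sdiff, not_or]
      tauto
    rwa [← hLam_compl inc (Cᶜ ∪ B), he] at h3
  have hd1 : Disjoint (C ∩ B) (C \ B) := by
    simp only [Finset.disjoint_left, mem_inter, mem_sdiff]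
    tauto
  have hU : (C ∩ B) ∪ (C \ B) ∪ ∅ = C := by
    ext a; simp only [mem_union, mem_inter, mem_sdiff, notMem_empty, or_false]; tauto
  rcases hC (C ∩ B) (C \ B) ∅ hd1 disjoint_bot_right disjoint_bot_right hU
    with hh | hh | hh
  · omega
  · omega
  · rw [hLam_empty] at hh; omega

/-- Let `(A, Ā)` be a doubly tri-well-linked separation of a hypergraph. Then the
hypergraph contains a tangle `𝒯` of order `λ(A)` such that every `B ⊆ E(G)` with
`λ(B) < λ(A)` and `B ⊆ A` or `B ⊆ Ā` satisfies `B ∈ 𝒯`. -/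
theorem doublyTriWellLinked_tangle (inc : E → Finset V)
    (hcov : ∀ v : V, ∃ e : E, v ∈ inc e)
    (A : Finset E) (h1 : TriWellLinked inc A) (h2 : TriWellLinked inc Aᶜ) :
    ∃ 𝒯 : Set (Finset E), IsTangle inc (hLam inc A) 𝒯 ∧
      ∀ B : Finset E, hLam inc B < hLam inc A → (B ⊆ A ∨ B ⊆ Aᶜ) → B ∈ 𝒯 := by
  classical
  set k := hLam inc A with hk
  have hkc : hLam inc Aᶜ = k := hLam_compl inc A
  -- the tangle
  refine ⟨{B | hLam inc B < k ∧ hLam inc (A ∩ B) < k ∧ hLam inc (Aᶜ ∩ B) < k}, ?_, ?_⟩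
  · refine ⟨fun B hB => hB.1, ?_, ?_, ?_⟩
    · -- axiom (2)
      intro B hB
      by_cases hBA : hLam inc (A ∩ B) < k
      · exact Or.inl ⟨hB, hBA, triWellLinked_key inc A h1 B hB hBA⟩
      · right
        push_neg at hBA
        have hs := hLam_submod inc A B
        have hAc : hLam inc (Aᶜ ∩ Bᶜ) < k := by
          have he : (A ∪ B)ᶜ = Aᶜ ∩ Bᶜ := by
            ext a; simp only [mem_compl, mem_union, mem_inter, not_or]
          have : hLam inc (A ∪ B) < k := by omega
          rwa [← hLam_compl inc (A ∪ B), he] at this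
        have hBc : hLam inc Bᶜ < k := by rwa [hLam_compl]
        have hA' : hLam inc (A ∩ Bᶜ) < k := by
          have := triWellLinked_key inc Aᶜ h2 Bᶜ (by rwa [hkc]) (by rwa [hkc])
          rwa [compl_compl, hkc] at this
        exact ⟨hBc, hA', hAc⟩
    · -- axiom (3)
      intro B1 hB1 B2 hB2 B3 hB3 hU
      have hcover : (A ∩ B1) ∪ (A ∩ B2) ∪ (A ∩ B3) = A := by
        have := congrArg (fun S => A ∩ S) hU
        simpa [Finset.inter_union_distrib_left] using this
      exact absurd hcover
        (fun hc => triWellLinked_no_small_cover inc A h1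
          ((A ∩ B1).card + (A ∩ B2).card + (A ∩ B3).card) (A ∩ B1) (A ∩ B2) (A ∩ B3)
          le_rfl hc hB1.2.1 hB2.2.1 hB3.2.1)
    · -- axiom (4)
      intro e he
      obtain ⟨-, hA', hAc'⟩ := he
      by_cases heA : e ∈ A
      · have : Aᶜ ∩ ({e}ᶜ : Finset E) = Aᶜ := by
          ext a
          simp only [mem_inter, mem_compl, mem_singleton, and_iff_left_iff_imp]
          intro ha hae; exact ha (hae ▸ heA)
        rw [this, hkc] at hAc'
        omega
      · have : A ∩ ({e}ᶜ : Finset E) = A := by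
          ext a
          simp only [mem_inter, mem_compl, mem_singleton, and_iff_left_iff_imp]
          intro ha hae; exact heA (hae ▸ ha)
        rw [this] at hA'
        omega
  · -- the extra property
    intro B hB hsub
    have hk1 : 0 < k := by omega
    rcases hsub with hBA | hBAc
    · have e1 : A ∩ B = B := Finset.inter_eq_right.mpr hBA
      have e2 : Aᶜ ∩ B = ∅ := by
        ext a; simp only [mem_inter, mem_compl, notMem_empty, iff_false, not_and]
        intro ha hb; exact ha (hBA hb)
      exact ⟨hB, by rwa [e1], by rw [e2, hLam_empty]; omega⟩
    · have e1 : Aᶜ ∩ B = B := Finset.inter_eq_right.mpr hBAc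
      have e2 : A ∩ B = ∅ := by
        ext a; simp only [mem_inter, notMem_empty, iff_false, not_and]
        intro ha hb; exact Finset.mem_compl.mp (hBAc hb) ha
      exact ⟨hB, by rw [e2, hLam_empty]; omega, by rwa [e1]⟩
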